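/- Let Φ be a satisfiable 2-CNF with satisfying assignment σ*, let x ∈ V(Φ), and run WalkSAT on Φ. Define Δ*(Φ,x,t) = 1{σ^{(t)} does not satisfy Φ} · Σ_{l ∈ ℒ(Φ,{σ*(x)·x})} 1{σ^{(t)}(l) ≠ σ*(l)}, and let T*(Φ,x) be the least t with Δ*(Φ,x,t) = 0. Then for all 0 ≤ t < T*(Φ,x), the conditional expectation over the algorithm's choices satisfies E[Δ*(Φ,x,t+1) | σ^{(t)}] ≤ Δ*(Φ,x,t); that is, (Δ*(Φ,x,t))_t is a supermartingale up to time T*(Φ,x). -/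

import Mathlib

open Filter

open scoped Classical

/-- A literal is a sign (`true` = positive) together with a variable. -/
abbrev Lit (V : Type) := Bool × V

/-- A 2-clause is a disjunction of two literals. -/
abbrev Clause (V : Type) := Lit V × Lit V

/-- A 2-CNF is a finite list of 2-clauses. -/
abbrev CNF (V : Type) := List (Clause V)

/-- The negation of a literal. -/
def Lit.negate {V : Type} (l : Lit V) : Lit V := (!l.1, l.2)

/-- A literal is satisfied by an assignment if the variable is assigned its sign. -/
def litSat {V : Type} (σ : V → Bool) (l : Lit V) : Prop := σ l.2 = l.1

/-- A clause is satisfied if one of its two literals is. -/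
def clauseSat {V : Type} (σ : V → Bool) (c : Clause V) : Prop := litSat σ c.1 ∨ litSat σ c.2

/-- A 2-CNF is satisfied if all of its clauses are. -/
def cnfSat {V : Type} (σ : V → Bool) (Φ : CNF V) : Prop := ∀ c ∈ Φ, clauseSat σ c

instance {V : Type} (σ : V → Bool) (l : Lit V) : Decidable (litSat σ l) := by
  unfold litSat; infer_instance

instance {V : Type} (σ : V → Bool) (c : Clause V) : Decidable (clauseSat σ c) := by
  unfold clauseSat; infer_instance

instance {V : Type} (σ : V → Bool) (Φ : CNF V) : Decidable (cnfSat σ Φ) := by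
  unfold cnfSat; infer_instance

/-- In a proper 2-CNF, the two literals of each clause have distinct variables. -/
def validCNF {V : Type} (Φ : CNF V) : Prop := ∀ c ∈ Φ, c.1.2 ≠ c.2.2

/-- A set `L` of literals is closed under Unit Clause Propagation on `Φ`:
whenever a clause can be written `¬ l' ∨ l''` with `l' ∈ L`, also `l'' ∈ L`. -/
def ucpClosed {V : Type} (Φ : CNF V) (L : Set (Lit V)) : Prop :=
  ∀ c ∈ Φ, (Lit.negate c.1 ∈ L → c.2 ∈ L) ∧ (Lit.negate c.2 ∈ L → c.1 ∈ L)

/-- `ℒ(Φ, {l})`: the set of literals produced by UCP from `{l}`, i.e. the least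
set containing `l` that is closed under unit clause propagation. -/
def ucpLits {V : Type} (Φ : CNF V) (l : Lit V) : Set (Lit V) :=
  ⋂₀ {L : Set (Lit V) | l ∈ L ∧ ucpClosed Φ L}

/-- `𝒱(Φ, {l})`: the variables underlying `ℒ(Φ, {l})`. -/
def ucpVars {V : Type} (Φ : CNF V) (l : Lit V) : Set V := Prod.snd '' ucpLits Φ l

/-! ### WalkSAT -/

/-- Flip the value of variable `v` in assignment `σ`. -/
def flipVar {V : Type} [DecidableEq V] (σ : V → Bool) (v : V) : V → Bool :=
  fun u => if u = v then !σ u else σ u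

/-- The list of clauses of `Φ` violated by `σ`. -/
def violated {V : Type} (Φ : CNF V) (σ : V → Bool) : List (Clause V) :=
  Φ.filter fun c => decide (¬ clauseSat σ c)

/-- One step of WalkSAT, driven by a random seed `s`.  If `σ` violates some clause,
then a violated clause is selected via `s.1 % (number of violated clauses)`
(this is a uniformly random violated clause, since `s.1` is uniform on
`Fin (Φ.length)!` and the number of violated clauses divides `(Φ.length)!`),
one of its two literals is selected via the uniform bit `s.2`, and the underlying
variable is flipped.  If `σ` satisfies `Φ`, nothing happens. -/
def wsNext {V : Type} [DecidableEq V] (Φ : CNF V) (s : ℕ × Bool) (σ : V → Bool) : V → Bool :=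
  if h : (violated Φ σ).length = 0 then σ
  else
    let c := (violated Φ σ).get ⟨s.1 % (violated Φ σ).length, Nat.mod_lt _ (Nat.pos_of_ne_zero h)⟩
    flipVar σ (if s.2 then c.1.2 else c.2.2)

/-- The space of random seeds driving one run of WalkSAT on `Φ` (at most
`100 n²` steps, each using an independent uniform pair).  The uniform measure on
this finite space makes each step's clause/literal choices uniform and independent. -/
abbrev wsSeedSpace (V : Type) [Fintype V] (Φ : CNF V) : Type :=
  Fin (100 * (Fintype.card V) ^ 2) → Fin (Nat.factorial Φ.length) × Bool

/-- `σ^{(t)}`: the WalkSAT assignment after `t` steps, starting from the all-true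
assignment, for the realization `ω` of the random seeds.  After `100 n²` steps, or
once `Φ` is satisfied, the assignment no longer changes. -/
def wsState {V : Type} [Fintype V] [DecidableEq V] (Φ : CNF V) (ω : wsSeedSpace V Φ) :
    ℕ → (V → Bool)
  | 0 => fun _ => true
  | t + 1 =>
    if h : t < 100 * (Fintype.card V) ^ 2 then
      wsNext Φ (((ω ⟨t, h⟩).1 : ℕ), (ω ⟨t, h⟩).2) (wsState Φ ω t)
    else wsState Φ ω t

/-- `T(Φ)`: the total number of flips WalkSAT performs, i.e. the first time the
current assignment satisfies `Φ` (capped at the time limit `100 n²`). -/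
noncomputable def wsT {V : Type} [Fintype V] [DecidableEq V] (Φ : CNF V)
    (ω : wsSeedSpace V Φ) : ℕ :=
  sInf ({t | cnfSat (wsState Φ ω t) Φ} ∪ {100 * (Fintype.card V) ^ 2})

/-- `N(Φ, l)`: the total number of times WalkSAT flips variables from `𝒱(Φ,{l})`. -/
noncomputable def wsN {V : Type} [Fintype V] [DecidableEq V] (Φ : CNF V)
    (ω : wsSeedSpace V Φ) (l : Lit V) : ℕ :=
  ∑ v ∈ (Set.toFinite (ucpVars Φ l)).toFinset,
    ∑ t ∈ Finset.Icc 1 (wsT Φ ω),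
      if wsState Φ ω (t - 1) v ≠ wsState Φ ω t v then 1 else 0

/-- Expectation over the random choices of WalkSAT (uniform over all seeds). -/
noncomputable def wsExp {V : Type} [Fintype V] [DecidableEq V] (Φ : CNF V)
    (g : wsSeedSpace V Φ → ℝ) : ℝ :=
  (∑ ω : wsSeedSpace V Φ, g ω) / (Fintype.card (wsSeedSpace V Φ) : ℝ)

/-! ### The random formula `Φ_{n,m}` -/

/-- A sample point for the random 2-CNF: an ordered tuple of `m` clauses on the
variables `x₁, …, xₙ`. -/
abbrev FSpace (n m : ℕ) : Type := Fin m → Clause (Fin n)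

/-- The 2-CNF corresponding to a sample point. -/
def toCNF {n m : ℕ} (f : FSpace n m) : CNF (Fin n) := List.ofFn f

/-- The set of proper sample points: each of the `m` clauses is one of the
`4n(n-1)` 2-clauses on two distinct variables.  The uniform distribution on this
finite set is exactly the distribution of `Φ_{n,m}` (m independent uniform clauses). -/
noncomputable def validFormulas (n m : ℕ) : Finset (FSpace n m) :=
  Finset.univ.filter fun f => ∀ i, (f i).1.2 ≠ (f i).2.2

/-- Probability of an event under the random 2-CNF `Φ_{n,m}`. -/
noncomputable def prF (n m : ℕ) (P : FSpace n m → Prop) : ℝ :=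
  (((validFormulas n m).filter fun f => P f).card : ℝ) / ((validFormulas n m).card : ℝ)

/-- Expectation of a functional of the random 2-CNF `Φ_{n,m}`. -/
noncomputable def expF (n m : ℕ) (g : FSpace n m → ℝ) : ℝ :=
  (∑ f ∈ validFormulas n m, g f) / ((validFormulas n m).card : ℝ)

/-- `X(Φ) = Σ_x (|𝒱(Φ,{x})|² + |𝒱(Φ,{¬x})|²)`. -/
noncomputable def Xval (n : ℕ) (Φ : CNF (Fin n)) : ℝ :=
  ∑ x : Fin n,
    (((ucpVars Φ (true, x)).ncard : ℝ) ^ 2 + ((ucpVars Φ (false, x)).ncard : ℝ) ^ 2)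

/-- `Δ*(Φ,x,t) = 1{σ^{(t)} ⊭ Φ} · Σ_{l ∈ ℒ(Φ,{σ*(x)·x})} 1{σ^{(t)}(l) ≠ σ*(l)}`: the number of
literals of the implication sub-formula of `σ*(x)·x` whose value at time `t` disagrees with their
value under `σ*`, set to `0` once WalkSAT has reached a satisfying assignment. -/
noncomputable def deltaStar {V : Type} [Fintype V] [DecidableEq V] (Φ : CNF V)
    (σstar : V → Bool) (x : V) (ω : wsSeedSpace V Φ) (t : ℕ) : ℝ :=
  (if cnfSat (wsState Φ ω t) Φ then 0 else 1) *
    ({l | l ∈ ucpLits Φ (σstar x, x) ∧ litSat (wsState Φ ω t) l ≠ litSat σstar l}.ncard : ℝ)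

/-!
Since `σ*` satisfies every literal of `ℒ = ℒ(Φ,{σ*(x)·x})`, `Δ*` counts the literals of `ℒ`
falsified by `σ^{(t)}`, and flipping a variable `v` changes this count by at most one, through the
literal `(σ*(v), v)` only. Let `l₁ ∨ l₂` be the violated clause picked by WalkSAT. If flipping the
variable of `l₁` increases the count, then the negation of `l₁` lies in `ℒ`, so UCP puts `l₂` into
`ℒ`; as `l₂` is false, flipping its variable decreases the count. So the two equally likely choices
of literal do not increase `Δ*` on average. On the seed space this pairing is the involution
negating the literal bit of step `t`, which preserves the history before `t`.
-/

theorem Finset.sum_le_card_mul_of_add_comp_le {ι R : Type*} [CommSemiring R] [LinearOrder R]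
    [IsStrictOrderedRing R] {s : Finset ι} {τ : ι → ι} (hτs : ∀ i ∈ s, τ i ∈ s)
    (hτ : ∀ i ∈ s, τ (τ i) = i) {f : ι → R} {c : R} (hf : ∀ i ∈ s, f i + f (τ i) ≤ 2 * c) :
    ∑ i ∈ s, f i ≤ s.card * c := by
  have hcomp : ∑ i ∈ s, f (τ i) = ∑ i ∈ s, f i :=
    Finset.sum_nbij' τ τ hτs hτs hτ hτ fun _ _ => rfl
  refine le_of_mul_le_mul_left ?_ (two_pos : (0 : R) < 2)
  calc 2 * ∑ i ∈ s, f i = ∑ i ∈ s, (f i + f (τ i)) := by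
        rw [Finset.sum_add_distrib, hcomp, two_mul]
    _ ≤ ∑ _i ∈ s, 2 * c := Finset.sum_le_sum hf
    _ = 2 * (s.card * c) := by rw [Finset.sum_const, nsmul_eq_mul]; ring

section UnitClausePropagation

variable {V : Type} {Φ : CNF V}

theorem ucpLits_subset {l : Lit V} {L : Set (Lit V)} (hl : l ∈ L) (hL : ucpClosed Φ L) :
    ucpLits Φ l ⊆ L :=
  Set.sInter_subset_of_mem ⟨hl, hL⟩

theorem ucpClosed_ucpLits (l : Lit V) : ucpClosed Φ (ucpLits Φ l) := fun c hc =>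
  ⟨fun h => Set.mem_sInter.2 fun _L hL => (hL.2 c hc).1 (Set.mem_sInter.1 h _ hL),
    fun h => Set.mem_sInter.2 fun _L hL => (hL.2 c hc).2 (Set.mem_sInter.1 h _ hL)⟩

theorem litSat_negate {σ : V → Bool} {l : Lit V} : litSat σ l.negate ↔ ¬ litSat σ l := by
  cases l with | mk b v => cases b <;> cases h : σ v <;> simp [litSat, Lit.negate, h]

theorem ucpClosed_setOf_litSat {σ : V → Bool} (hσ : cnfSat σ Φ) :
    ucpClosed Φ {l | litSat σ l} := fun c hc =>
  ⟨fun h => (hσ c hc).resolve_left (litSat_negate.1 h),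
    fun h => (hσ c hc).resolve_right (litSat_negate.1 h)⟩

theorem negate_eq_of_not_litSat {σ : V → Bool} {l : Lit V} {b : Bool} (hl : ¬ litSat σ l)
    (hb : litSat σ (b, l.2)) : l.negate = (b, l.2) := by
  obtain ⟨a, w⟩ := l
  cases a <;> cases b <;> cases h : σ w <;> simp_all [litSat, Lit.negate]

theorem litSat_of_mem_ucpLits {σ : V → Bool} (hσ : cnfSat σ Φ) {l l' : Lit V}
    (hl : litSat σ l) (hl' : l' ∈ ucpLits Φ l) : litSat σ l' :=
  ucpLits_subset (L := {l | litSat σ l}) hl (ucpClosed_setOf_litSat hσ) hl'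

end UnitClausePropagation

section FlipVar

variable {V : Type} [DecidableEq V] {σ : V → Bool} {l : Lit V} {v : V}

theorem litSat_flipVar_of_ne (h : l.2 ≠ v) : litSat (flipVar σ v) l ↔ litSat σ l := by
  simp [litSat, flipVar, h]

theorem litSat_flipVar_self : litSat (flipVar σ l.2) l ↔ ¬ litSat σ l := by
  cases h : σ l.2 <;> cases l.1 <;> simp [litSat, flipVar, h]

end FlipVar

section Disagreement

variable {V : Type} {σ : V → Bool} {l : Lit V}

def disagreement (L : Set (Lit V)) (σ σ' : V → Bool) : Set (Lit V) :=
  {l | l ∈ L ∧ litSat σ l ≠ litSat σ' l}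

variable {L : Set (Lit V)} {σ' : V → Bool} (hL : ∀ l ∈ L, litSat σ' l)
include hL

theorem eq_of_mem_of_litSat (hl : l ∈ L) : l = (σ' l.2, l.2) :=
  Prod.ext (hL l hl).symm rfl

theorem mem_disagreement_iff : l ∈ disagreement L σ σ' ↔ l ∈ L ∧ ¬ litSat σ l :=
  and_congr_right fun hl => by simp [hL l hl]

variable [DecidableEq V] {v : V}

theorem mem_disagreement_flipVar_of_ne (hl : l ≠ (σ' v, v)) :
    l ∈ disagreement L (flipVar σ v) σ' ↔ l ∈ disagreement L σ σ' := by
  rw [mem_disagreement_iff hL, mem_disagreement_iff hL]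
  refine and_congr_right fun hlL => ?_
  have hv : l.2 ≠ v := fun h => hl (by rw [eq_of_mem_of_litSat hL hlL, h])
  rw [litSat_flipVar_of_ne hv]

theorem mem_disagreement_flipVar_self :
    (σ' v, v) ∈ disagreement L (flipVar σ v) σ' ↔ (σ' v, v) ∈ L ∧ litSat σ (σ' v, v) := by
  rw [mem_disagreement_iff hL, litSat_flipVar_self (l := (σ' v, v)), not_not]

variable [Finite V]

theorem ncard_disagreement_flipVar_le :
    (disagreement L (flipVar σ v) σ').ncard ≤ (disagreement L σ σ').ncard + 1 := by
  refine (Set.ncard_le_ncard fun l hl => ?_).trans (Set.ncard_insert_le (σ' v, v) _)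
  by_cases h : l = (σ' v, v)
  · exact .inl h
  · exact .inr ((mem_disagreement_flipVar_of_ne hL h).1 hl)

theorem ncard_disagreement_flipVar_le_self (h : ¬ ((σ' v, v) ∈ L ∧ litSat σ (σ' v, v))) :
    (disagreement L (flipVar σ v) σ').ncard ≤ (disagreement L σ σ').ncard := by
  refine Set.ncard_le_ncard fun l hl => ?_
  have hne : l ≠ (σ' v, v) := by
    rintro rfl
    exact h ((mem_disagreement_flipVar_self hL).1 hl)
  exact (mem_disagreement_flipVar_of_ne hL hne).1 hl

theorem ncard_disagreement_flipVar_add_one_le (h : (σ' v, v) ∈ disagreement L σ σ') :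
    (disagreement L (flipVar σ v) σ').ncard + 1 ≤ (disagreement L σ σ').ncard := by
  rw [← Set.ncard_sdiff_singleton_add_one h, add_le_add_iff_right]
  refine Set.ncard_le_ncard fun l hl => ?_
  have hne : l ≠ (σ' v, v) := by
    rintro rfl
    exact ((mem_disagreement_iff hL).1 h).2 ((mem_disagreement_flipVar_self hL).1 hl).2
  exact ⟨(mem_disagreement_flipVar_of_ne hL hne).1 hl, hne⟩

theorem ncard_disagreement_flipVar_add_flipVar_le {Φ : CNF V} (hLΦ : ucpClosed Φ L) {c : Clause V}
    (hc : c ∈ Φ) (hcσ : ¬ clauseSat σ c) :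
    (disagreement L (flipVar σ c.1.2) σ').ncard + (disagreement L (flipVar σ c.2.2) σ').ncard ≤
      2 * (disagreement L σ σ').ncard := by
  obtain ⟨h₁, h₂⟩ := not_or.1 hcσ
  have hmem : ∀ {l : Lit V}, l ∈ L → ¬ litSat σ l → (σ' l.2, l.2) ∈ disagreement L σ σ' :=
    fun {l} hl hlσ => by
      rw [← eq_of_mem_of_litSat hL hl]; exact (mem_disagreement_iff hL).2 ⟨hl, hlσ⟩
  have le₁ := ncard_disagreement_flipVar_le hL (σ := σ) (v := c.1.2)
  have le₂ := ncard_disagreement_flipVar_le hL (σ := σ) (v := c.2.2)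
  by_cases g₁ : (σ' c.1.2, c.1.2) ∈ L ∧ litSat σ (σ' c.1.2, c.1.2)
  · have := ncard_disagreement_flipVar_add_one_le hL
      (hmem ((hLΦ c hc).1 (negate_eq_of_not_litSat h₁ g₁.2 ▸ g₁.1)) h₂)
    omega
  by_cases g₂ : (σ' c.2.2, c.2.2) ∈ L ∧ litSat σ (σ' c.2.2, c.2.2)
  · have := ncard_disagreement_flipVar_add_one_le hL
      (hmem ((hLΦ c hc).2 (negate_eq_of_not_litSat h₂ g₂.2 ▸ g₂.1)) h₁)
    omega
  have := ncard_disagreement_flipVar_le_self hL g₁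
  have := ncard_disagreement_flipVar_le_self hL g₂
  omega

end Disagreement

section Seeds

variable {V : Type} [Fintype V] {Φ : CNF V}

/-- Negate the literal choice of step `t`; past the time limit there is no such step and this is
the identity. -/
def flipBit (t : ℕ) (ω : wsSeedSpace V Φ) : wsSeedSpace V Φ :=
  fun s => if (s : ℕ) = t then ((ω s).1, !(ω s).2) else ω s

theorem flipBit_flipBit (t : ℕ) (ω : wsSeedSpace V Φ) : flipBit t (flipBit t ω) = ω := by
  funext s
  by_cases h : (s : ℕ) = t <;> simp [flipBit, h]

theorem flipBit_apply_of_lt (t : ℕ) (ω : wsSeedSpace V Φ) {s : Fin (100 * Fintype.card V ^ 2)}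
    (hs : (s : ℕ) < t) : flipBit t ω s = ω s :=
  if_neg hs.ne

theorem flipBit_apply_self (ω : wsSeedSpace V Φ) {t : ℕ} (ht : t < 100 * Fintype.card V ^ 2) :
    flipBit t ω ⟨t, ht⟩ = ((ω ⟨t, ht⟩).1, !(ω ⟨t, ht⟩).2) :=
  if_pos rfl

end Seeds

section WalkSAT

variable {V : Type} [DecidableEq V] {Φ : CNF V}

theorem exists_wsNext_eq_flipVar {σ : V → Bool} (hσ : ¬ cnfSat σ Φ) (a : ℕ) :
    ∃ c ∈ Φ, ¬ clauseSat σ c ∧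
      ∀ b, wsNext Φ (a, b) σ = flipVar σ (if b then c.1.2 else c.2.2) := by
  have hne : (violated Φ σ).length ≠ 0 := by
    obtain ⟨c, hc, hcσ⟩ := not_forall₂.1 hσ
    exact List.length_pos_of_mem (List.mem_filter.2 ⟨hc, decide_eq_true hcσ⟩) |>.ne'
  set c := (violated Φ σ).get ⟨a % (violated Φ σ).length, Nat.mod_lt _ (Nat.pos_of_ne_zero hne)⟩
  obtain ⟨hc, hcσ⟩ := List.mem_filter.1 (List.get_mem (violated Φ σ) _)
  exact ⟨c, hc, of_decide_eq_true hcσ, fun b => dif_neg hne⟩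

variable [Fintype V]

theorem wsState_succ_of_lt (ω : wsSeedSpace V Φ) {t : ℕ} (ht : t < 100 * Fintype.card V ^ 2) :
    wsState Φ ω (t + 1) = wsNext Φ ((ω ⟨t, ht⟩).1, (ω ⟨t, ht⟩).2) (wsState Φ ω t) :=
  dif_pos ht

theorem wsState_succ_of_le (ω : wsSeedSpace V Φ) {t : ℕ} (ht : 100 * Fintype.card V ^ 2 ≤ t) :
    wsState Φ ω (t + 1) = wsState Φ ω t :=
  dif_neg ht.not_gt

theorem wsState_congr {ω ω' : wsSeedSpace V Φ} {t : ℕ}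
    (h : ∀ s : Fin (100 * Fintype.card V ^ 2), (s : ℕ) < t → ω' s = ω s) :
    wsState Φ ω' t = wsState Φ ω t := by
  induction t with
  | zero => rfl
  | succ t ih =>
    have ih := ih fun s hs => h s (hs.trans t.lt_succ_self)
    by_cases ht : t < 100 * Fintype.card V ^ 2
    · rw [wsState_succ_of_lt ω ht, wsState_succ_of_lt ω' ht, ih, h ⟨t, ht⟩ t.lt_succ_self]
    · rw [wsState_succ_of_le ω (not_lt.1 ht), wsState_succ_of_le ω' (not_lt.1 ht), ih]

theorem wsState_flipBit (t : ℕ) (ω : wsSeedSpace V Φ) :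
    wsState Φ (flipBit t ω) t = wsState Φ ω t :=
  wsState_congr fun _ hs => flipBit_apply_of_lt t ω hs

end WalkSAT

section DeltaStar

variable {V : Type} [Fintype V] [DecidableEq V] {Φ : CNF V} {σstar : V → Bool} {x : V}

theorem deltaStar_eq (ω : wsSeedSpace V Φ) (t : ℕ) :
    deltaStar Φ σstar x ω t = (if cnfSat (wsState Φ ω t) Φ then 0 else 1) *
      ((disagreement (ucpLits Φ (σstar x, x)) (wsState Φ ω t) σstar).ncard : ℝ) :=
  rfl

theorem deltaStar_le_ncard (ω : wsSeedSpace V Φ) (t : ℕ) :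
    deltaStar Φ σstar x ω t ≤
      (disagreement (ucpLits Φ (σstar x, x)) (wsState Φ ω t) σstar).ncard := by
  rw [deltaStar_eq]
  split_ifs <;> simp

theorem not_cnfSat_and_deltaStar_eq_ncard_of_ne_zero {ω : wsSeedSpace V Φ} {t : ℕ}
    (h : deltaStar Φ σstar x ω t ≠ 0) :
    ¬ cnfSat (wsState Φ ω t) Φ ∧ deltaStar Φ σstar x ω t =
      (disagreement (ucpLits Φ (σstar x, x)) (wsState Φ ω t) σstar).ncard := by
  rw [deltaStar_eq] at h ⊢
  split_ifs at h ⊢ with hsat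
  · exact absurd (zero_mul _) h
  · exact ⟨hsat, one_mul _⟩

theorem deltaStar_succ_add_flipBit_le (hsat : cnfSat σstar Φ) (ω : wsSeedSpace V Φ) {t : ℕ}
    (hσ : ¬ cnfSat (wsState Φ ω t) Φ) :
    deltaStar Φ σstar x ω (t + 1) + deltaStar Φ σstar x (flipBit t ω) (t + 1) ≤
      2 * ((disagreement (ucpLits Φ (σstar x, x)) (wsState Φ ω t) σstar).ncard : ℝ) := by
  have hL : ∀ l ∈ ucpLits Φ (σstar x, x), litSat σstar l := fun _ => litSat_of_mem_ucpLits hsat rfl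
  refine (add_le_add (deltaStar_le_ncard _ _) (deltaStar_le_ncard _ _)).trans ?_
  by_cases ht : t < 100 * Fintype.card V ^ 2
  · obtain ⟨c, hc, hcσ, hnext⟩ := exists_wsNext_eq_flipVar hσ (ω ⟨t, ht⟩).1
    have hpair := ncard_disagreement_flipVar_add_flipVar_le hL (ucpClosed_ucpLits _) hc hcσ
    rw [wsState_succ_of_lt ω ht, wsState_succ_of_lt _ ht, wsState_flipBit, flipBit_apply_self,
      hnext, hnext]
    cases (ω ⟨t, ht⟩).2
    · rw [add_comm]; exact_mod_cast hpair
    · exact_mod_cast hpair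
  · rw [wsState_succ_of_le ω (not_lt.1 ht), wsState_succ_of_le _ (not_lt.1 ht), wsState_flipBit,
      two_mul]

end DeltaStar

theorem stmt_13_general {V : Type} [Fintype V] [DecidableEq V] (Φ : CNF V)
    (σstar : V → Bool) (hsat : cnfSat σstar Φ) (x : V) (ω : wsSeedSpace V Φ) (t : ℕ)
    (ht : ∀ s ≤ t, deltaStar Φ σstar x ω s ≠ 0) :
    (∑ ω' ∈ Finset.univ.filter
        (fun ω' : wsSeedSpace V Φ =>
          ∀ s : Fin (100 * (Fintype.card V) ^ 2), (s : ℕ) < t → ω' s = ω s),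
        deltaStar Φ σstar x ω' (t + 1)) /
      ((Finset.univ.filter
        (fun ω' : wsSeedSpace V Φ =>
          ∀ s : Fin (100 * (Fintype.card V) ^ 2), (s : ℕ) < t → ω' s = ω s)).card : ℝ) ≤
      deltaStar Φ σstar x ω t := by
  set S := Finset.univ.filter fun ω' : wsSeedSpace V Φ =>
    ∀ s : Fin (100 * (Fintype.card V) ^ 2), (s : ℕ) < t → ω' s = ω s
  have hagree : ∀ ω' ∈ S, wsState Φ ω' t = wsState Φ ω t := fun ω' hω' =>
    wsState_congr (Finset.mem_filter.1 hω').2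
  obtain ⟨hσ, hΔ⟩ := not_cnfSat_and_deltaStar_eq_ncard_of_ne_zero (ht t le_rfl)
  have hflip : ∀ ω' ∈ S, flipBit t ω' ∈ S := fun ω' hω' => Finset.mem_filter.2
    ⟨Finset.mem_univ _, fun s hs => (flipBit_apply_of_lt t ω' hs).trans
      ((Finset.mem_filter.1 hω').2 s hs)⟩
  refine div_le_of_le_mul₀ (Nat.cast_nonneg _) (hΔ ▸ Nat.cast_nonneg _) ?_
  rw [mul_comm]
  refine Finset.sum_le_card_mul_of_add_comp_le hflip (fun ω' _ => flipBit_flipBit t ω')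
    fun ω' hω' => ?_
  rw [hΔ, ← hagree ω' hω']
  exact deltaStar_succ_add_flipBit_le hsat ω' (hagree ω' hω' ▸ hσ)

/-- **The supermartingale property (2.8).** Let `Φ` be a satisfiable 2-CNF with satisfying
assignment `σ*` and let `x` be a variable.  For every time `t` before `T*(Φ,x)` (the first time
with `Δ*(Φ,x,·) = 0`; `t < T*(Φ,x)` means `Δ*(Φ,x,s) ≠ 0` for all `s ≤ t`) and every realization
`ω` of WalkSAT's choices, the conditional expectation of `Δ*(Φ,x,t+1)` given the history up to
time `t` (the average over all seeds agreeing with `ω` on the first `t` steps, which determines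
`σ^{(t)}`) is at most `Δ*(Φ,x,t)`. -/
theorem stmt_13 {V : Type} [Fintype V] [DecidableEq V] (Φ : CNF V) (hΦ : validCNF Φ)
    (σstar : V → Bool) (hsat : cnfSat σstar Φ) (x : V) (ω : wsSeedSpace V Φ) (t : ℕ)
    (ht : ∀ s ≤ t, deltaStar Φ σstar x ω s ≠ 0) :
    (∑ ω' ∈ Finset.univ.filter
        (fun ω' : wsSeedSpace V Φ =>
          ∀ s : Fin (100 * (Fintype.card V) ^ 2), (s : ℕ) < t → ω' s = ω s),
        deltaStar Φ σstar x ω' (t + 1)) /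
      ((Finset.univ.filter
        (fun ω' : wsSeedSpace V Φ =>
          ∀ s : Fin (100 * (Fintype.card V) ^ 2), (s : ℕ) < t → ω' s = ω s)).card : ℝ) ≤
      deltaStar Φ σstar x ω t :=
  stmt_13_general Φ σstar hsat x ω t ht
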